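/- arXiv:1912.04685 — 6 statements merged into one kernel-verified Lean document; each statement's English description precedes it below -/
import Mathlib

section
/- Let 𝒳 be a countable set and let f : 𝒳 ⇀ 𝒳 and G : 𝒳 ⇀ ℝ be partial functions with the same domain of definition dom f. Suppose that for every finitely supported probability distribution p on 𝒳 with supp p ⊆ dom f one has ∑_x p(x)G(x) + S(f_*p) − S(p) ≥ 0. Then for every y ∈ img f, ∑_{x : f(x)=y} e^{−G(x)} ≤ 1. -/
open scoped ENNReal

/-- Shannon entropy (in nats) of a distribution `p` on a countable set,
as a real number (used for finitely supported distributions). -/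
noncomputable def entropyR {X : Type*} (p : X → ℝ) : ℝ :=
  -∑' x, p x * Real.log (p x)

/-- Pushforward of a distribution `p` along a map `f`:
`(f_*p)(y) = ∑_{x : f(x)=y} p(x)`. -/
noncomputable def pushforward {X : Type*} (f : X → X) (p : X → ℝ) : X → ℝ :=
  fun y => ∑' x, Set.indicator {x | f x = y} p x

/-!
The Gibbs distribution `p ∝ e^{-G}` on a finite fibre `F ⊆ f⁻¹{y}` has a point mass as
pushforward, so `S(f_*p) = 0`, while `∑ p G − S(p) = −log Z` with `Z = ∑_{x ∈ F} e^{−G(x)}`.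
The hypothesis applied to this `p` gives `log Z ≤ 0`, i.e. `Z ≤ 1`, and the fibre sum is the
supremum of such `Z`.
-/

section Entropy

variable {X : Type*}

theorem entropyR_pi_single [DecidableEq X] (y : X) : entropyR (Pi.single y (1 : ℝ)) = 0 := by
  have : ∀ x, Pi.single (M := fun _ => ℝ) y 1 x * Real.log (Pi.single (M := fun _ => ℝ) y 1 x)
      = 0 := fun x => by
    rcases eq_or_ne x y with rfl | hx <;> simp [*]
  simp [entropyR, this]

theorem pushforward_eq_pi_single [DecidableEq X] {f : X → X} {p : X → ℝ} {y : X}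
    (hp : HasSum p 1) (hfy : ∀ x ∈ Function.support p, f x = y) :
    pushforward f p = Pi.single y 1 := by
  funext y'
  rcases eq_or_ne y' y with rfl | hy'
  · have : Set.indicator {x | f x = y'} p = p :=
      Set.indicator_eq_self.mpr fun x hx => hfy x hx
    simp [pushforward, this, hp.tsum_eq]
  · have : Set.indicator {x | f x = y'} p = 0 :=
      Set.indicator_eq_zero'.mpr <| Set.disjoint_left.mpr fun x hx hxy =>
        hy' (hxy.symm.trans (hfy x hx))
    simp [pushforward, this, hy']

end Entropy

section Gibbs

variable {X : Type*} (F : Finset X) (G : X → ℝ)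

noncomputable def gibbs : X → ℝ :=
  Set.indicator F fun x => Real.exp (-G x) / ∑ z ∈ F, Real.exp (-G z)

variable {F G}

theorem gibbs_nonneg (x : X) : 0 ≤ gibbs F G x :=
  Set.indicator_nonneg (fun _ _ => by positivity) x

theorem support_gibbs_subset : Function.support (gibbs F G) ⊆ F :=
  Set.support_indicator_subset

theorem gibbs_of_mem {x : X} (hx : x ∈ F) :
    gibbs F G x = Real.exp (-G x) / ∑ z ∈ F, Real.exp (-G z) :=
  Set.indicator_of_mem (Finset.mem_coe.mpr hx) _

theorem gibbs_eq_zero_of_notMem {x : X} (hx : x ∉ F) : gibbs F G x = 0 :=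
  Set.indicator_of_notMem (by simpa using hx) _

theorem sum_gibbs (hF : F.Nonempty) : ∑ x ∈ F, gibbs F G x = 1 := by
  have hZ : 0 < ∑ z ∈ F, Real.exp (-G z) := F.sum_pos (fun _ _ => Real.exp_pos _) hF
  rw [Finset.sum_congr rfl fun _ => gibbs_of_mem, ← Finset.sum_div, div_self hZ.ne']

theorem hasSum_gibbs (hF : F.Nonempty) : HasSum (gibbs F G) 1 :=
  sum_gibbs hF ▸ hasSum_sum_of_ne_finset_zero fun _ => gibbs_eq_zero_of_notMem

theorem tsum_gibbs_mul_sub_entropyR (hF : F.Nonempty) :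
    ∑' x, gibbs F G x * G x - entropyR (gibbs F G) = -Real.log (∑ z ∈ F, Real.exp (-G z)) := by
  set Z := ∑ z ∈ F, Real.exp (-G z)
  have hZ : 0 < Z := F.sum_pos (fun _ _ => Real.exp_pos _) hF
  have hlog : ∀ x ∈ F, Real.log (gibbs F G x) = -G x - Real.log Z := fun x hx => by
    rw [gibbs_of_mem hx, Real.log_div (Real.exp_ne_zero _) hZ.ne', Real.log_exp]
  rw [entropyR, tsum_eq_sum fun x hx => by rw [gibbs_eq_zero_of_notMem hx, zero_mul],
    tsum_eq_sum fun x hx => by rw [gibbs_eq_zero_of_notMem hx, zero_mul], sub_neg_eq_add,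
    ← Finset.sum_add_distrib]
  calc ∑ x ∈ F, (gibbs F G x * G x + gibbs F G x * Real.log (gibbs F G x))
      = ∑ x ∈ F, gibbs F G x * -Real.log Z :=
        Finset.sum_congr rfl fun x hx => by rw [hlog x hx]; ring
    _ = -Real.log Z := by rw [← Finset.sum_mul, sum_gibbs hF, one_mul]

end Gibbs

theorem stmt0_general {X : Type*} (D : Set X) (f : X → X) (G : X → ℝ)
    (h : ∀ p : X → ℝ, (∀ x, 0 ≤ p x) → HasSum p 1 → (Function.support p).Finite →
      Function.support p ⊆ D →
      0 ≤ (∑' x, p x * G x) + entropyR (pushforward f p) - entropyR p) :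
    ∀ y ∈ f '' D,
      (∑' x, Set.indicator {x | x ∈ D ∧ f x = y}
        (fun x => ENNReal.ofReal (Real.exp (-G x))) x) ≤ 1 := by
  classical
  intro y _
  rw [ENNReal.tsum_eq_iSup_sum]
  refine iSup_le fun s => ?_
  rw [Finset.sum_indicator_eq_sum_filter,
    ← ENNReal.ofReal_sum_of_nonneg fun _ _ => (Real.exp_pos _).le, ENNReal.ofReal_le_one]
  set F := s.filter fun x => x ∈ {x | x ∈ D ∧ f x = y}
  have hF_fibre : ∀ x ∈ Function.support (gibbs F G), x ∈ D ∧ f x = y := fun x hx =>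
    (Finset.mem_filter.mp (support_gibbs_subset hx)).2
  rcases F.eq_empty_or_nonempty with hF | hF
  · simp [hF]
  have hfree := h (gibbs F G) gibbs_nonneg (hasSum_gibbs hF)
    (F.finite_toSet.subset support_gibbs_subset) fun x hx => (hF_fibre x hx).1
  rw [pushforward_eq_pi_single (hasSum_gibbs hF) fun x hx => (hF_fibre x hx).2,
    entropyR_pi_single, add_zero, tsum_gibbs_mul_sub_entropyR hF] at hfree
  exact (Real.log_nonpos_iff (F.sum_nonneg fun _ _ => (Real.exp_pos _).le)).mp (by linarith)

/-- Proposition 1 of the paper, implication (condition 1 ⇒ condition 2):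
if for every finitely supported probability distribution `p` supported in the
domain `D` one has `∑_x p(x) G(x) + S(f_*p) − S(p) ≥ 0`, then for every
`y` in the image of `f` one has `∑_{x ∈ D : f(x)=y} e^{−G(x)} ≤ 1`. -/
theorem stmt0 {X : Type*} [Countable X] (D : Set X) (f : X → X) (G : X → ℝ)
    (h : ∀ p : X → ℝ, (∀ x, 0 ≤ p x) → HasSum p 1 → (Function.support p).Finite →
      Function.support p ⊆ D →
      0 ≤ (∑' x, p x * G x) + entropyR (pushforward f p) - entropyR p) :
    ∀ y ∈ f '' D,
      (∑' x, Set.indicator {x | x ∈ D ∧ f x = y}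
        (fun x => ENNReal.ofReal (Real.exp (-G x))) x) ≤ 1 :=
  stmt0_general D f G h
end

section
/- Let 𝒳 be a countable set and let f : 𝒳 ⇀ 𝒳 and G : 𝒳 ⇀ ℝ be partial functions with the same domain of definition dom f, and suppose that for every y ∈ img f, ∑_{x : f(x)=y} e^{−G(x)} ≤ 1 (in particular G(x) ≥ 0 for all x ∈ dom f). Then for every probability distribution p on 𝒳 with supp p ⊆ dom f and finite Shannon entropy S(p) < ∞, one has ∑_x p(x)G(x) ≥ S(p) − S(f_*p), where the left-hand sum is taken in [0,∞]. -/
open scoped ENNReal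

/-- Shannon entropy (in nats) of a distribution `p` on a countable set,
with value in `[0,∞]`. -/
noncomputable def entropyE {X : Type*} (p : X → ℝ) : ℝ≥0∞ :=
  ∑' x, ENNReal.ofReal (-(p x * Real.log (p x)))

/-!
Put `q = f_*p` and `r(x) = q(f x) e^{-G x}` on `D`. Gibbs' inequality `log t ≤ t - 1`, applied
to `t = r(x)/p(x)`, gives pointwise `-p log p + p ≤ p G - p log q(f x) + r`. Summing, the
middle term is the cross entropy of `p` against `q ∘ f`, which collapses fibrewise to `S(q)`,
while `∑ r = ∑_y q(y) ∑_{f x = y} e^{-G x} ≤ ∑_y q(y) = 1`. Hence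
`S(p) + 1 ≤ ∑ p G + S(q) + 1`.
-/

open Real

theorem ENNReal.tsum_fiberwise_indicator {X Y : Type*} (g : X → Y) (h : X → ℝ≥0∞) :
    ∑' y, ∑' x, {x | g x = y}.indicator h x = ∑' x, h x := by
  simp only [← tsum_subtype]
  exact ENNReal.tsum_fiberwise h g

theorem ENNReal.tsum_mul_indicator_fiber_le {X Y : Type*} (g : X → Y) (Q : Y → ℝ≥0∞)
    (w : X → ℝ≥0∞) (hw : ∀ y, ∑' x, {x | g x = y}.indicator w x ≤ 1) :
    ∑' x, Q (g x) * w x ≤ ∑' y, Q y := by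
  rw [← ENNReal.tsum_fiberwise_indicator g]
  refine ENNReal.tsum_le_tsum fun y => ?_
  have hfiber : {x | g x = y}.indicator (fun x => Q (g x) * w x)
      = fun x => Q y * {x | g x = y}.indicator w x := by
    ext x
    by_cases hx : g x = y <;> simp [hx]
  rw [hfiber, ENNReal.tsum_mul_left]
  exact mul_le_of_le_one_right' (hw y)

theorem tsum_indicator_fiber_le_one {X Y : Type*} {D : Set X} {g : X → Y} {w : X → ℝ≥0∞}
    (hw : ∀ y ∈ g '' D, ∑' x, {x | x ∈ D ∧ g x = y}.indicator w x ≤ 1) (y : Y) :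
    ∑' x, {x | g x = y}.indicator (D.indicator w) x ≤ 1 := by
  rw [Set.indicator_indicator, Set.inter_comm]
  by_cases hy : y ∈ g '' D
  · exact hw y hy
  · have hempty : D ∩ {x | g x = y} = ∅ :=
      Set.eq_empty_of_forall_notMem fun x hx => hy ⟨x, hx⟩
    simp [hempty]

theorem Real.neg_mul_log_add_le {p b : ℝ} (hp : 0 ≤ p) (hb : 0 < b) :
    -(p * log p) + p ≤ p * -log b + b := by
  rcases hp.eq_or_lt with rfl | hp
  · simpa using hb.le
  have hgibbs := mul_le_mul_of_nonneg_left (log_le_sub_one_of_pos (div_pos hb hp)) hp.le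
  rw [log_div hb.ne' hp.ne', mul_sub, mul_sub, mul_one, mul_div_cancel₀ b hp.ne'] at hgibbs
  linarith

theorem ENNReal.ofReal_neg_mul_log_add_le {p c g : ℝ} (hp0 : 0 ≤ p) (hp1 : p ≤ 1)
    (hc : 0 < c) :
    ENNReal.ofReal (-(p * Real.log p)) + ENNReal.ofReal p
      ≤ ENNReal.ofReal (p * g) + ENNReal.ofReal (p * -Real.log c)
        + ENNReal.ofReal c * ENNReal.ofReal (Real.exp (-g)) := by
  have hgibbs := Real.neg_mul_log_add_le hp0 (by positivity : 0 < c * Real.exp (-g))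
  rw [Real.log_mul hc.ne' (Real.exp_pos _).ne', Real.log_exp] at hgibbs
  rw [← ENNReal.ofReal_mul hc.le,
    ← ENNReal.ofReal_add (neg_nonneg.2 (mul_log_nonpos hp0 hp1)) hp0]
  refine (ENNReal.ofReal_le_ofReal ?_).trans
    (ENNReal.ofReal_add_le.trans (add_le_add_left ENNReal.ofReal_add_le _))
  linarith

section Pushforward

variable {X : Type*} {f : X → X} {p : X → ℝ}

theorem le_pushforward_apply (hp : ∀ x, 0 ≤ p x) (hps : Summable p) (x : X) :
    p x ≤ pushforward f p (f x) := by
  have h := (hps.indicator {z | f z = f x}).le_tsum x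
    fun z _ => Set.indicator_nonneg (fun z _ => hp z) z
  rwa [Set.indicator_of_mem (by rfl)] at h

theorem ofReal_pushforward (hp : ∀ x, 0 ≤ p x) (hps : Summable p) (y : X) :
    ENNReal.ofReal (pushforward f p y)
      = ∑' x, {x | f x = y}.indicator (fun x => ENNReal.ofReal (p x)) x := by
  rw [pushforward, ENNReal.ofReal_tsum_of_nonneg
    (Set.indicator_nonneg fun z _ => hp z) (hps.indicator _)]
  exact tsum_congr fun x => by by_cases hx : f x = y <;> simp [hx]

theorem tsum_ofReal_pushforward (hp : ∀ x, 0 ≤ p x) (hps : Summable p) :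
    ∑' y, ENNReal.ofReal (pushforward f p y) = ∑' x, ENNReal.ofReal (p x) := by
  simp only [ofReal_pushforward hp hps, ENNReal.tsum_fiberwise_indicator]

theorem tsum_ofReal_mul_neg_log_pushforward (hp : ∀ x, 0 ≤ p x) (hps : Summable p) :
    ∑' x, ENNReal.ofReal (p x * -log (pushforward f p (f x)))
      = entropyE (pushforward f p) := by
  rw [← ENNReal.tsum_fiberwise_indicator f, entropyE]
  refine tsum_congr fun y => ?_
  have hfiber :
      {x | f x = y}.indicator (fun x => ENNReal.ofReal (p x * -log (pushforward f p (f x))))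
        = fun x => {x | f x = y}.indicator (fun x => ENNReal.ofReal (p x)) x
          * ENNReal.ofReal (-log (pushforward f p y)) := by
    ext x
    by_cases hx : f x = y
    · simp [hx, ← ENNReal.ofReal_mul (hp x)]
    · simp [hx]
  have hq : 0 ≤ pushforward f p y := tsum_nonneg (Set.indicator_nonneg fun z _ => hp z)
  rw [hfiber, ENNReal.tsum_mul_right, ← ofReal_pushforward hp hps, ← ENNReal.ofReal_mul hq,
    neg_mul_eq_mul_neg]

end Pushforward

theorem stmt1_general {X : Type*} (D : Set X) (f : X → X) (G : X → ℝ)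
    (hZ : ∀ y ∈ f '' D,
      (∑' x, Set.indicator {x | x ∈ D ∧ f x = y}
        (fun x => ENNReal.ofReal (Real.exp (-G x))) x) ≤ 1) :
    ∀ p : X → ℝ, (∀ x, 0 ≤ p x) → HasSum p 1 → Function.support p ⊆ D →
      entropyE p ≠ ⊤ →
      entropyE p - entropyE (pushforward f p) ≤ ∑' x, ENNReal.ofReal (p x * G x) := by
  intro p hp hsum hsupp _
  set q := pushforward f p
  set E : X → ℝ≥0∞ := D.indicator fun x => ENNReal.ofReal (exp (-G x)) with hE
  have hpointwise (x : X) :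
      ENNReal.ofReal (-(p x * log (p x))) + ENNReal.ofReal (p x)
        ≤ ENNReal.ofReal (p x * G x) + ENNReal.ofReal (p x * -log (q (f x)))
          + ENNReal.ofReal (q (f x)) * E x := by
    rcases (hp x).eq_or_lt with h0 | hpos
    · simp [← h0]
    rw [hE, Set.indicator_of_mem (hsupp hpos.ne')]
    exact ENNReal.ofReal_neg_mul_log_add_le (hp x) (le_hasSum hsum x fun j _ => hp j)
      (hpos.trans_le (le_pushforward_apply hp hsum.summable x))
  have hP : ∑' x, ENNReal.ofReal (p x) = 1 := by
    rw [← ENNReal.ofReal_tsum_of_nonneg hp hsum.summable, hsum.tsum_eq, ENNReal.ofReal_one]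
  have key : entropyE p + 1 ≤ ∑' x, ENNReal.ofReal (p x * G x) + entropyE q + 1 := calc
    entropyE p + 1 = ∑' x, (ENNReal.ofReal (-(p x * log (p x))) + ENNReal.ofReal (p x)) := by
      rw [ENNReal.tsum_add, hP, entropyE]
    _ ≤ ∑' x, (ENNReal.ofReal (p x * G x) + ENNReal.ofReal (p x * -log (q (f x)))
          + ENNReal.ofReal (q (f x)) * E x) := ENNReal.tsum_le_tsum hpointwise
    _ = ∑' x, ENNReal.ofReal (p x * G x) + entropyE q
          + ∑' x, ENNReal.ofReal (q (f x)) * E x := by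
      rw [ENNReal.tsum_add, ENNReal.tsum_add, tsum_ofReal_mul_neg_log_pushforward hp hsum.summable]
    _ ≤ ∑' x, ENNReal.ofReal (p x * G x) + entropyE q + 1 := by
      gcongr
      calc ∑' x, ENNReal.ofReal (q (f x)) * E x ≤ ∑' y, ENNReal.ofReal (q y) :=
            ENNReal.tsum_mul_indicator_fiber_le f _ E (tsum_indicator_fiber_le_one hZ)
        _ = 1 := by rw [tsum_ofReal_pushforward hp hsum.summable, hP]
  exact tsub_le_iff_right.2 ((ENNReal.add_le_add_iff_right ENNReal.one_ne_top).1 key)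

/-- Proposition 1 of the paper, implication (condition 2 ⇒ condition 1):
if `∑_{x ∈ D : f(x)=y} e^{−G(x)} ≤ 1` for every `y` in the image of `f`
(in particular `G ≥ 0` on the domain `D`), then every probability
distribution `p` supported in `D` with finite Shannon entropy satisfies
`∑_x p(x) G(x) ≥ S(p) − S(f_*p)`, the left-hand sum taken in `[0,∞]`. -/
theorem stmt1 {X : Type*} [Countable X] (D : Set X) (f : X → X) (G : X → ℝ)
    (hG0 : ∀ x ∈ D, 0 ≤ G x)
    (hZ : ∀ y ∈ f '' D,
      (∑' x, Set.indicator {x | x ∈ D ∧ f x = y}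
        (fun x => ENNReal.ofReal (Real.exp (-G x))) x) ≤ 1) :
    ∀ p : X → ℝ, (∀ x, 0 ≤ p x) → HasSum p 1 → Function.support p ⊆ D →
      entropyE p ≠ ⊤ →
      entropyE p - entropyE (pushforward f p) ≤ ∑' x, ENNReal.ofReal (p x * G x) :=
  stmt1_general D f G hZ
end

section
/- Let 𝒳 be a countable set and let f : 𝒳 ⇀ 𝒳 and G : 𝒳 ⇀ ℝ be partial functions with the same domain of definition dom f. Fix y ∈ img f and assume Z(y) := ∑_{x : f(x)=y} e^{−G(x)} is finite and positive and that ∑_{x : f(x)=y} e^{−G(x)} |G(x)| < ∞. Let w_y be the probability distribution on the fiber f^{-1}(y) given by w_y(x) = e^{−G(x)}/Z(y). Then the entropy production of w_y satisfies Σ(w_y) := S(f_*w_y) − S(w_y) + ∑_x w_y(x) G(x) = −ln Z(y). In particular, if the entropy-production inequality ∑_x p(x)G(x) + S(f_*p) − S(p) ≥ 0 holds for all distributions p supported in dom f, then −ln Z(y) ≥ 0 for all y ∈ img f. -/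
/-!
On a fiber `f⁻¹(y)` the pushforward of any distribution is the point mass at `y`, which has
zero entropy, so the entropy production of a distribution `p` on the fiber is
`∑ p G - S(p)`. For the Gibbs weights `p = e^{-G}/Z` one has `-ln p = G + ln Z` pointwise,
hence `S(p) = ∑ p G + ln Z` and the entropy production is `-ln Z`.

Applied to the Gibbs distribution of a finite piece `F` of the fiber, the entropy-production
inequality therefore gives `∑_{x ∈ F} e^{-G(x)} ≤ 1`; letting `F` exhaust the fiber,
`Z(y) ≤ 1`.
-/

open scoped ENNReal

open Real

section EntropyBasics

variable {X : Type*}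

theorem entropyE_toReal_eq_entropyR {p : X → ℝ} (hp₀ : ∀ x, 0 ≤ p x)
    (hp₁ : ∀ x, p x ≤ 1) (hp : Summable fun x => p x * log (p x)) :
    (entropyE p).toReal = entropyR p := by
  have hterm : ∀ x, 0 ≤ -(p x * log (p x)) := fun x =>
    neg_nonneg.2 (mul_log_nonpos (hp₀ x) (hp₁ x))
  rw [entropyE, ← ENNReal.ofReal_tsum_of_nonneg hterm hp.neg, tsum_neg,
    ENNReal.toReal_ofReal (by simpa only [tsum_neg] using tsum_nonneg hterm), entropyR]

variable [DecidableEq X]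

theorem entropyE_single (y : X) : entropyE (Pi.single y 1 : X → ℝ) = 0 := by
  refine ENNReal.tsum_eq_zero.2 fun x => ?_
  rcases eq_or_ne x y with rfl | hx <;> simp [*]

theorem entropyR_single (y : X) : entropyR (Pi.single y 1 : X → ℝ) = 0 := by
  rw [entropyR, neg_eq_zero]
  refine (tsum_congr fun x => ?_).trans tsum_zero
  rcases eq_or_ne x y with rfl | hx <;> simp [*]

theorem pushforward_eq_single {f : X → X} {p : X → ℝ} {y : X} (hp : ∀ x, p x ≠ 0 → f x = y)
    (hp₁ : HasSum p 1) : pushforward f p = Pi.single y 1 := by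
  funext y'
  rcases eq_or_ne y' y with rfl | hy'
  · have : Set.indicator {x | f x = y'} p = p := Set.indicator_eq_self.2 fun x hx => hp x hx
    rw [pushforward, this, hp₁.tsum_eq, Pi.single_eq_same]
  · have : Set.indicator {x | f x = y'} p = 0 := funext fun x =>
      Set.indicator_apply_eq_zero.2 fun hx =>
        by_contra fun hpx => hy' (hx.symm.trans (hp x hpx))
    simp only [pushforward, this, Pi.zero_apply, tsum_zero, Pi.single_apply, hy', if_false]

end EntropyBasics

section Gibbs

variable {X : Type*} {S : Set X} {G : X → ℝ} {Z : ℝ}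

noncomputable def gibbsOn (S : Set X) (G : X → ℝ) (Z : ℝ) : X → ℝ :=
  S.indicator fun x => exp (-G x) / Z

theorem gibbsOn_nonneg (hZ : 0 ≤ Z) (x : X) : 0 ≤ gibbsOn S G Z x :=
  Set.indicator_nonneg (fun _ _ => by positivity) x

theorem hasSum_gibbsOn (hZ : HasSum (S.indicator fun x => exp (-G x)) Z) (hZ₀ : Z ≠ 0) :
    HasSum (gibbsOn S G Z) 1 := by
  have hw : gibbsOn S G Z = fun x => S.indicator (fun x => exp (-G x)) x / Z :=
    funext fun x => by by_cases hx : x ∈ S <;> simp [gibbsOn, hx]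
  simpa only [hw, div_self hZ₀] using hZ.div_const Z

theorem mul_log_gibbsOn (hZ₀ : Z ≠ 0) (x : X) :
    gibbsOn S G Z x * log (gibbsOn S G Z x) =
      -(gibbsOn S G Z x * G x + gibbsOn S G Z x * log Z) := by
  by_cases hx : x ∈ S
  · rw [gibbsOn, Set.indicator_of_mem hx, log_div (exp_pos _).ne' hZ₀, log_exp]
    ring
  · simp [gibbsOn, Set.indicator_of_notMem hx]

theorem summable_gibbsOn_mul (hZ : 0 < Z)
    (hG : Summable (S.indicator fun x => exp (-G x) * |G x|)) :
    Summable fun x => gibbsOn S G Z x * G x := by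
  refine (hG.div_const Z).of_norm_bounded fun x => ?_
  by_cases hx : x ∈ S
  · rw [gibbsOn, Set.indicator_of_mem hx, Set.indicator_of_mem hx, Real.norm_eq_abs, abs_mul,
      abs_div, abs_of_pos (exp_pos _), abs_of_pos hZ, div_mul_eq_mul_div]
  · simp [gibbsOn, Set.indicator_of_notMem hx]

theorem entropyR_gibbsOn (hZ : HasSum (S.indicator fun x => exp (-G x)) Z) (hZ₀ : Z ≠ 0)
    (hG : Summable fun x => gibbsOn S G Z x * G x) :
    entropyR (gibbsOn S G Z) = ∑' x, gibbsOn S G Z x * G x + log Z := by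
  have hw := (hasSum_gibbsOn hZ hZ₀).summable.mul_right (log Z)
  rw [entropyR, tsum_congr (mul_log_gibbsOn hZ₀), tsum_neg, neg_neg, hG.tsum_add hw,
    tsum_mul_right, (hasSum_gibbsOn hZ hZ₀).tsum_eq, one_mul]

theorem summable_mul_log_gibbsOn (hZ : HasSum (S.indicator fun x => exp (-G x)) Z)
    (hZ₀ : Z ≠ 0) (hG : Summable fun x => gibbsOn S G Z x * G x) :
    Summable fun x => gibbsOn S G Z x * log (gibbsOn S G Z x) := by
  simp only [mul_log_gibbsOn hZ₀]
  exact (hG.add ((hasSum_gibbsOn hZ hZ₀).summable.mul_right _)).neg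

end Gibbs

section EntropyProduction

variable {X : Type*}

def EntropyProductionNonneg (D : Set X) (f : X → X) (G : X → ℝ) : Prop :=
  ∀ p : X → ℝ, (∀ x, 0 ≤ p x) → HasSum p 1 → (Function.support p).Finite →
    Function.support p ⊆ D → 0 ≤ (∑' x, p x * G x) + entropyR (pushforward f p) - entropyR p

theorem sum_exp_neg_le_one_of_entropyProductionNonneg {D : Set X} {f : X → X} {G : X → ℝ}
    {y : X} (H : EntropyProductionNonneg D f G) (F : Finset X)
    (hF : ∀ x ∈ F, x ∈ D ∧ f x = y) :
    ∑ x ∈ F, exp (-G x) ≤ 1 := by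
  classical
  rcases F.eq_empty_or_nonempty with rfl | hFne
  · simp
  set ZF := ∑ x ∈ F, exp (-G x)
  have hZF : 0 < ZF := Finset.sum_pos (fun x _ => exp_pos _) hFne
  have hvanish : ∀ x ∉ F, gibbsOn (↑F) G ZF x = 0 := fun x hx =>
    Set.indicator_of_notMem (Finset.mem_coe.not.2 hx) _
  have hsupp : Function.support (gibbsOn (↑F) G ZF) ⊆ ↑F := fun x hx =>
    by_contra fun h => hx (hvanish x h)
  have hsum : HasSum ((↑F : Set X).indicator fun x => exp (-G x)) ZF := by
    have : HasSum ((↑F : Set X).indicator fun x => exp (-G x))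
        (∑ x ∈ F, (↑F : Set X).indicator (fun x => exp (-G x)) x) :=
      hasSum_sum_of_ne_finset_zero fun x hx => Set.indicator_of_notMem (Finset.mem_coe.not.2 hx) _
    rwa [Finset.sum_indicator_subset _ subset_rfl] at this
  have hp₁ := hasSum_gibbsOn hsum hZF.ne'
  have hG : Summable fun x => gibbsOn (↑F) G ZF x * G x :=
    summable_of_ne_finset_zero fun x hx => by rw [hvanish x hx, zero_mul]
  have hprod := H _ (gibbsOn_nonneg hZF.le) hp₁ (F.finite_toSet.subset hsupp)
    (fun x hx => (hF x (hsupp hx)).1)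
  rw [pushforward_eq_single (fun x hx => (hF x (hsupp hx)).2) hp₁, entropyR_single,
    entropyR_gibbsOn hsum hZF.ne' hG] at hprod
  exact (log_nonpos_iff hZF.le).1 (by linarith)

theorem partition_le_one_of_entropyProductionNonneg {D : Set X} {f : X → X} {G : X → ℝ}
    {y : X} {Z : ℝ} (H : EntropyProductionNonneg D f G)
    (hZ : HasSum (Set.indicator {x | x ∈ D ∧ f x = y} fun x => exp (-G x)) Z) : Z ≤ 1 := by
  classical
  refine hasSum_le_of_sum_le hZ fun u => ?_
  rw [← Finset.sum_filter_add_sum_filter_not u (· ∈ {x | x ∈ D ∧ f x = y}),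
    Finset.sum_congr rfl fun x hx => Set.indicator_of_mem (Finset.mem_filter.1 hx).2 _,
    Finset.sum_eq_zero fun x hx => Set.indicator_of_notMem (Finset.mem_filter.1 hx).2 _, add_zero]
  exact sum_exp_neg_le_one_of_entropyProductionNonneg H _ fun x hx => (Finset.mem_filter.1 hx).2

end EntropyProduction

theorem stmt4_general {X : Type*} (D : Set X) (f : X → X) (G : X → ℝ)
    (y : X)
    (Zy : ℝ)
    (hZy : HasSum (Set.indicator {x | x ∈ D ∧ f x = y} (fun x => Real.exp (-G x))) Zy)
    (hZpos : 0 < Zy)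
    (hGsum : Summable
      (Set.indicator {x | x ∈ D ∧ f x = y} (fun x => Real.exp (-G x) * |G x|)))
    (w : X → ℝ)
    (hwdef : w = Set.indicator {x | x ∈ D ∧ f x = y} (fun x => Real.exp (-G x) / Zy)) :
    ((entropyE (pushforward f w)).toReal - (entropyE w).toReal + (∑' x, w x * G x)
        = -Real.log Zy)
    ∧ ((∀ p : X → ℝ, (∀ x, 0 ≤ p x) → HasSum p 1 → (Function.support p).Finite →
          Function.support p ⊆ D →
          0 ≤ (∑' x, p x * G x) + entropyR (pushforward f p) - entropyR p)
        → 0 ≤ -Real.log Zy) := by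
  classical
  change w = gibbsOn _ G Zy at hwdef
  subst hwdef
  have hw₁ := hasSum_gibbsOn hZy hZpos.ne'
  have hG := summable_gibbsOn_mul hZpos hGsum
  refine ⟨?_, fun H => neg_nonneg.2 (log_nonpos hZpos.le
    (partition_le_one_of_entropyProductionNonneg H hZy))⟩
  rw [pushforward_eq_single (fun x hx => (Set.support_indicator_subset hx).2) hw₁,
    entropyE_single, entropyE_toReal_eq_entropyR (gibbsOn_nonneg hZpos.le)
      (fun x => le_hasSum hw₁ x fun x _ => gibbsOn_nonneg hZpos.le x)
      (summable_mul_log_gibbsOn hZy hZpos.ne' hG), entropyR_gibbsOn hZy hZpos.ne' hG]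
  simp

/-- The residual entropy production formula (eq. appres, Appendix B of the
paper): for `y ∈ img f` with `Z(y) = ∑_{x ∈ D : f(x)=y} e^{−G(x)}` finite and
positive and `∑_{x : f(x)=y} e^{−G(x)}|G(x)| < ∞`, the fiber Gibbs
distribution `w_y(x) = e^{−G(x)}/Z(y)` has entropy production
`Σ(w_y) = S(f_*w_y) − S(w_y) + ∑_x w_y(x)G(x) = −ln Z(y)`; in particular, if
the entropy-production inequality holds for all distributions supported in
the domain, then `−ln Z(y) ≥ 0`. -/
theorem stmt4 {X : Type*} [Countable X] (D : Set X) (f : X → X) (G : X → ℝ)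
    (y : X) (hy : y ∈ f '' D)
    (Zy : ℝ)
    (hZy : HasSum (Set.indicator {x | x ∈ D ∧ f x = y} (fun x => Real.exp (-G x))) Zy)
    (hZpos : 0 < Zy)
    (hGsum : Summable
      (Set.indicator {x | x ∈ D ∧ f x = y} (fun x => Real.exp (-G x) * |G x|)))
    (w : X → ℝ)
    (hwdef : w = Set.indicator {x | x ∈ D ∧ f x = y} (fun x => Real.exp (-G x) / Zy)) :
    ((entropyE (pushforward f w)).toReal - (entropyE w).toReal + (∑' x, w x * G x)
        = -Real.log Zy)
    ∧ ((∀ p : X → ℝ, (∀ x, 0 ≤ p x) → HasSum p 1 → (Function.support p).Finite →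
          Function.support p ⊆ D →
          0 ≤ (∑' x, p x * G x) + entropyR (pushforward f p) - entropyR p)
        → 0 ≤ -Real.log Zy) :=
  stmt4_general D f G y Zy hZy hZpos hGsum w hwdef
end

section
/- Let 𝒳 be a countable set and let f : 𝒳 ⇀ 𝒳 and G : 𝒳 ⇀ ℝ be partial functions with the same domain of definition dom f. Assume Z(y) := ∑_{x : f(x)=y} e^{−G(x)} ∈ (0,∞) for every y ∈ img f, and define w_y(x) := e^{−G(x)}/Z(y) on the fiber f^{-1}(y). Then for every probability distribution p with supp p ⊆ dom f, finite entropy S(p) < ∞, and ∑_x p(x)|G(x)| < ∞, the entropy production Σ(p) := S(f_*p) − S(p) + ∑_x p(x)G(x) decomposes over the islands (fibers) of f as Σ(p) = ∑_{y ∈ img f} (f_*p)(y) · [ D( p(· | f(x)=y) ‖ w_y ) − ln Z(y) ], where D(q ‖ r) = ∑_x q(x) ln(q(x)/r(x)) is the Kullback–Leibler divergence. -/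
open scoped ENNReal

/-!
Split every series over `X` into its sums over the islands `f⁻¹(y)`. On an island of positive
mass `P = (f_*p)(y)`, expanding `ln((p/P)/(e^{-G}/Z))` shows that `P·[D(p(·|y) ‖ w_y) − ln Z]`
equals `∑_{f(x)=y} (p ln p + p G) − P ln P`: the normaliser `Z` cancels. Islands of zero mass
contribute nothing to either side. Summing over `y` gives the claim; the only analytic input
beyond finite entropy and `∑ p|G| < ∞` is that `y ↦ P ln P` is summable, which follows from
`−P ln P ≤ ∑_{f(x)=y} −p ln p` (each `p(x) ≤ P`, so `ln p(x) ≤ ln P`).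
-/

open Real

noncomputable def klDiv {X : Type*} (q r : X → ℝ) : ℝ :=
  ∑' x, q x * Real.log (q x / r x)

noncomputable def fiberCond {X : Type*} (f : X → X) (p : X → ℝ) (y : X) : X → ℝ :=
  fun x => {x | f x = y}.indicator p x / pushforward f p y

noncomputable def fiberGibbs {X : Type*} (D : Set X) (f : X → X) (G Z : X → ℝ) (y : X) :
    X → ℝ :=
  fun x => {x | x ∈ D ∧ f x = y}.indicator (fun x => Real.exp (-G x)) x / Z y

section Pushforward

variable {X : Type*} (f : X → X)

theorem hasSum_pushforward {u : X → ℝ} (hu : Summable u) :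
    HasSum (pushforward f u) (∑' x, u x) := by
  have h := hu.hasSum.tsum_fiberwise f
  rwa [show (fun y => ∑' x : f ⁻¹' {y}, u x) = pushforward f u from
    funext fun y => tsum_subtype _ u] at h

variable {f}

theorem pushforward_nonneg {u : X → ℝ} (hu : ∀ x, 0 ≤ u x) (y : X) :
    0 ≤ pushforward f u y :=
  tsum_nonneg fun _ => Set.indicator_nonneg (fun x _ => hu x) _

theorem le_pushforward {u : X → ℝ} (h0 : ∀ x, 0 ≤ u x) (hu : Summable u) (x : X) :
    u x ≤ pushforward f u (f x) :=
  (Set.indicator_of_mem (show x ∈ {x' | f x' = f x} from rfl) u).symm.le.trans <|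
    (hu.indicator _).le_tsum x fun _ _ => Set.indicator_nonneg (fun x _ => h0 x) _

theorem pushforward_apply_eq_zero {u : X → ℝ} {y : X} (h : ∀ x, f x = y → u x = 0) :
    pushforward f u y = 0 :=
  (tsum_congr fun x => Set.indicator_apply_eq_zero.2 (h x)).trans tsum_zero

theorem pushforward_add {u v : X → ℝ} (hu : Summable u) (hv : Summable v) (y : X) :
    pushforward f (fun x => u x + v x) y = pushforward f u y + pushforward f v y := by
  simp only [pushforward, Set.indicator_add]
  exact (hu.indicator _).tsum_add (hv.indicator _)

theorem pushforward_mul_const (u : X → ℝ) (c : ℝ) (y : X) :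
    pushforward f (fun x => u x * c) y = pushforward f u y * c := by
  simp only [pushforward, Set.indicator_mul_left, tsum_mul_right]

end Pushforward

section Entropy

variable {ι : Type*}

theorem toReal_entropyE {q : ι → ℝ} (h0 : ∀ i, 0 ≤ q i) (h1 : ∀ i, q i ≤ 1) :
    (entropyE q).toReal = ∑' i, -(q i * log (q i)) := by
  rw [entropyE, ENNReal.tsum_toReal_eq fun _ => ENNReal.ofReal_ne_top]
  exact tsum_congr fun i => ENNReal.toReal_ofReal <|
    (negMulLog_nonneg (h0 i) (h1 i)).trans_eq (neg_mul _ _)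

theorem summable_mul_log_of_entropyE_ne_top {q : ι → ℝ} (h0 : ∀ i, 0 ≤ q i)
    (h1 : ∀ i, q i ≤ 1) (h : entropyE q ≠ ⊤) : Summable fun i => q i * log (q i) := by
  simpa only [ENNReal.toReal_ofReal ((negMulLog_nonneg (h0 _) (h1 _)).trans_eq (neg_mul _ _)),
    neg_neg] using (ENNReal.summable_toReal h).neg

theorem neg_mul_log_tsum_le {q : ι → ℝ} (h0 : ∀ i, 0 ≤ q i) (hq : Summable q)
    (hlog : Summable fun i => q i * log (q i)) :
    -((∑' i, q i) * log (∑' i, q i)) ≤ ∑' i, -(q i * log (q i)) := by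
  rw [← neg_mul, ← tsum_neg, ← tsum_mul_right]
  refine (hq.neg.mul_right _).tsum_le_tsum (fun i => ?_) hlog.neg
  rcases (h0 i).eq_or_lt with hi | hi
  · simp [← hi]
  · rw [neg_mul, neg_le_neg_iff]
    exact mul_le_mul_of_nonneg_left
      (log_le_log hi (hq.le_tsum i fun j _ => h0 j)) hi.le

theorem indicator_mul_log (s : Set ι) (q : ι → ℝ) (i : ι) :
    s.indicator q i * log (s.indicator q i) = s.indicator (fun i => q i * log (q i)) i := by
  by_cases hi : i ∈ s <;> simp [hi]

end Entropy

section Islands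

variable {X : Type*} {f : X → X} {p : X → ℝ}

theorem summable_pushforward_mul_log (hp0 : ∀ x, 0 ≤ p x) (hp : Summable p)
    (hP1 : ∀ y, pushforward f p y ≤ 1) (hlog : Summable fun x => p x * log (p x)) :
    Summable fun y => pushforward f p y * log (pushforward f p y) := by
  have hbound : ∀ y, -(pushforward f p y * log (pushforward f p y))
      ≤ pushforward f (fun x => -(p x * log (p x))) y := fun y => by
    refine (neg_mul_log_tsum_le (Set.indicator_nonneg (fun x _ => hp0 x))
      (hp.indicator {x | f x = y})
      (by simpa only [indicator_mul_log] using hlog.indicator {x | f x = y})).trans_eq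
      (tsum_congr fun x => ?_)
    by_cases hx : f x = y <;> simp [hx]
  have hnonneg : ∀ y, 0 ≤ -(pushforward f p y * log (pushforward f p y)) := fun y =>
    (negMulLog_nonneg (pushforward_nonneg hp0 y) (hP1 y)).trans_eq (neg_mul _ _)
  simpa using (Summable.of_nonneg_of_le hnonneg hbound
    (hasSum_pushforward f hlog.neg).summable).neg

theorem div_mul_log_div_gibbs (q g : ℝ) {P Z : ℝ} (hP : P ≠ 0) (hZ : Z ≠ 0) :
    q / P * log (q / P / (exp (-g) / Z)) = (q * log q + q * g + q * (log Z - log P)) / P := by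
  rcases eq_or_ne q 0 with rfl | hq
  · simp
  rw [log_div (div_ne_zero hq hP) (div_ne_zero (exp_pos _).ne' hZ), log_div hq hP,
    log_div (exp_pos _).ne' hZ, log_exp]
  field_simp
  ring

theorem mul_klDiv_fiberGibbs_sub_log_of_pos {D : Set X} {G Z : X → ℝ} {y : X}
    (hp : Summable p) (hsupp : Function.support p ⊆ D)
    (hlog : Summable fun x => p x * log (p x)) (hG : Summable fun x => p x * G x)
    (hP : 0 < pushforward f p y) (hZ : 0 < Z y) :
    pushforward f p y * (klDiv (fiberCond f p y) (fiberGibbs D f G Z y) - log (Z y))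
      = pushforward f (fun x => p x * log (p x)) y
          - pushforward f p y * log (pushforward f p y)
          + pushforward f (fun x => p x * G x) y := by
  set P := pushforward f p y
  have hterm : ∀ x, fiberCond f p y x * log (fiberCond f p y x / fiberGibbs D f G Z y x)
      = {x | f x = y}.indicator
          (fun x => p x * log (p x) + p x * G x + p x * (log (Z y) - log P)) x / P := fun x => by
    simp only [fiberCond, fiberGibbs]
    by_cases hx : x ∈ {x | f x = y}
    · rcases eq_or_ne (p x) 0 with hpx | hpx
      · simp [hx, hpx]
      rw [Set.indicator_of_mem hx, Set.indicator_of_mem hx,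
        Set.indicator_of_mem (show x ∈ {x | x ∈ D ∧ f x = y} from ⟨hsupp hpx, hx⟩)]
      exact div_mul_log_div_gibbs _ _ hP.ne' hZ.ne'
    · simp [Set.indicator_of_notMem hx]
  have hsplit : pushforward f
        (fun x => p x * log (p x) + p x * G x + p x * (log (Z y) - log P)) y
      = pushforward f (fun x => p x * log (p x)) y + pushforward f (fun x => p x * G x) y
          + P * (log (Z y) - log P) := by
    rw [pushforward_add (hlog.add hG) (hp.mul_right _), pushforward_add hlog hG,
      pushforward_mul_const]
  rw [klDiv, tsum_congr hterm, tsum_div_const]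
  change P * (pushforward f _ y / P - log (Z y)) = _
  rw [hsplit]
  field_simp
  ring

theorem indicator_mul_klDiv_fiberGibbs_sub_log {D : Set X} {G Z : X → ℝ}
    (hp0 : ∀ x, 0 ≤ p x) (hp : Summable p) (hsupp : Function.support p ⊆ D)
    (hlog : Summable fun x => p x * log (p x)) (hG : Summable fun x => p x * G x)
    (hZ : ∀ y ∈ f '' D, 0 < Z y) (y : X) :
    (f '' D).indicator (fun y =>
        pushforward f p y * (klDiv (fiberCond f p y) (fiberGibbs D f G Z y) - log (Z y))) y
      = pushforward f (fun x => p x * log (p x)) y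
          - pushforward f p y * log (pushforward f p y)
          + pushforward f (fun x => p x * G x) y := by
  rcases (pushforward_nonneg hp0 y).eq_or_lt with hP | hP
  · have hfiber : ∀ x, f x = y → p x = 0 := fun x hx =>
      le_antisymm ((le_pushforward (f := f) hp0 hp x).trans_eq (by rw [hx]; exact hP.symm))
        (hp0 x)
    rw [Set.indicator_apply_eq_zero.2 fun _ => by simp [← hP],
      pushforward_apply_eq_zero (u := fun x => p x * log (p x)) fun x hx => by simp [hfiber x hx],
      pushforward_apply_eq_zero (u := fun x => p x * G x) fun x hx => by simp [hfiber x hx], ← hP]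
    simp
  · obtain ⟨x, hx, hpx⟩ : ∃ x, f x = y ∧ p x ≠ 0 := by
      by_contra! h
      exact hP.ne' (pushforward_apply_eq_zero h)
    have hy : y ∈ f '' D := ⟨x, hsupp hpx, hx⟩
    rw [Set.indicator_of_mem hy]
    exact mul_klDiv_fiberGibbs_sub_log_of_pos hp hsupp hlog hG hP (hZ y hy)

end Islands

theorem stmt5_general {X : Type*} (D : Set X) (f : X → X) (G : X → ℝ)
    (Z : X → ℝ)
    (hZfin : ∀ y ∈ f '' D,
      Summable (Set.indicator {x | x ∈ D ∧ f x = y} (fun x => Real.exp (-G x)))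
        ∧ 0 < Z y)
    (p : X → ℝ) (hp : ∀ x, 0 ≤ p x) (hsum : HasSum p 1)
    (hsupp : Function.support p ⊆ D)
    (hent : entropyE p ≠ ⊤) (hGint : Summable (fun x => p x * |G x|)) :
    (entropyE (pushforward f p)).toReal - (entropyE p).toReal + (∑' x, p x * G x)
      = ∑' y, Set.indicator (f '' D) (fun y =>
          pushforward f p y *
            ((∑' x, (Set.indicator {x | f x = y} p x / pushforward f p y) *
                Real.log ((Set.indicator {x | f x = y} p x / pushforward f p y) /
                  (Set.indicator {x | x ∈ D ∧ f x = y} (fun x => Real.exp (-G x)) x / Z y)))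
              - Real.log (Z y))) y := by
  have hp1 : ∀ x, p x ≤ 1 := fun x => le_hasSum hsum x fun j _ => hp j
  have hP1 : ∀ y, pushforward f p y ≤ 1 := fun y =>
    (le_hasSum (hasSum_pushforward f hsum.summable) y fun z _ => pushforward_nonneg hp z).trans
      hsum.tsum_eq.le
  have hlog := summable_mul_log_of_entropyE_ne_top hp hp1 hent
  have hG : Summable fun x => p x * G x := hGint.of_norm_bounded fun x => by
    rw [Real.norm_eq_abs, abs_mul, abs_of_nonneg (hp x)]
  have hPlog := summable_pushforward_mul_log hp hsum.summable hP1 hlog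
  have hSlog := hasSum_pushforward f hlog
  have hSG := hasSum_pushforward f hG
  -- the summand on the right is, up to unfolding, `P y * (klDiv … - log (Z y))`
  refine Eq.trans ?_ (tsum_congr <| indicator_mul_klDiv_fiberGibbs_sub_log hp hsum.summable
    hsupp hlog hG fun y hy => (hZfin y hy).2).symm
  rw [toReal_entropyE (pushforward_nonneg hp) hP1, toReal_entropyE hp hp1,
    (hSlog.summable.sub hPlog).tsum_add hSG.summable, hSlog.summable.tsum_sub hPlog,
    hSlog.tsum_eq, hSG.tsum_eq, tsum_neg, tsum_neg]
  ring

/-- The island decomposition of entropy production (Appendix B of the paper):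
with `Z(y) = ∑_{x ∈ D : f(x)=y} e^{−G(x)} ∈ (0,∞)` for every `y ∈ img f` and
the fiber Gibbs distributions `w_y(x) = e^{−G(x)}/Z(y)`, for every probability
distribution `p` supported in `D` with finite entropy and `∑_x p(x)|G(x)| < ∞`,
the entropy production `Σ(p) = S(f_*p) − S(p) + ∑_x p(x)G(x)` decomposes over
the islands (fibers) of `f` as
`Σ(p) = ∑_{y ∈ img f} (f_*p)(y)·[D(p(·|y) ‖ w_y) − ln Z(y)]`,
where `D(q‖r) = ∑_x q(x) ln(q(x)/r(x))` is the Kullback–Leibler divergence. -/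
theorem stmt5 {X : Type*} [Countable X] (D : Set X) (f : X → X) (G : X → ℝ)
    (Z : X → ℝ)
    (hZdef : ∀ y, Z y =
      ∑' x, Set.indicator {x | x ∈ D ∧ f x = y} (fun x => Real.exp (-G x)) x)
    (hZfin : ∀ y ∈ f '' D,
      Summable (Set.indicator {x | x ∈ D ∧ f x = y} (fun x => Real.exp (-G x)))
        ∧ 0 < Z y)
    (p : X → ℝ) (hp : ∀ x, 0 ≤ p x) (hsum : HasSum p 1)
    (hsupp : Function.support p ⊆ D)
    (hent : entropyE p ≠ ⊤) (hGint : Summable (fun x => p x * |G x|)) :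
    (entropyE (pushforward f p)).toReal - (entropyE p).toReal + (∑' x, p x * G x)
      = ∑' y, Set.indicator (f '' D) (fun y =>
          pushforward f p y *
            ((∑' x, (Set.indicator {x | f x = y} p x / pushforward f p y) *
                Real.log ((Set.indicator {x | f x = y} p x / pushforward f p y) /
                  (Set.indicator {x | x ∈ D ∧ f x = y} (fun x => Real.exp (-G x)) x / Z y)))
              - Real.log (Z y))) y :=
  stmt5_general D f G Z hZfin p hp hsum hsupp hent hGint
end

section
/- Let S ⊆ {0,1}* and let c ∈ ℕ. Suppose there is an injective map ψ from the set of binary strings of length at least 1 into S such that for every binary string x with ℓ(x) ≥ 1, ℓ(x) < ℓ(ψ(x)) ≤ ℓ(x) + 2·⌈log₂ ℓ(x)⌉ + c. Then ∑_{s ∈ S} 2^{−ℓ(s)} ℓ(s) = ∞. -/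
/-!
Precomposing `ψ` with `x ↦ true :: x` injects all of `{0,1}*` into `S`. The `2 ^ n` strings of
length `n + 1` land on words `s` with `n + 1 < ℓ(s) ≤ n + 1 + 2⌈log₂ (n + 1)⌉ + c`, so together
they contribute at least `(n + 1) / 2 ^ (2⌈log₂ (n + 1)⌉ + c + 1)`. Since
`2 ^ ⌈log₂ m⌉ ≤ 2m`, this is at least `2 ^ (-(c + 3)) / (n + 1)`, and the harmonic series diverges.
-/

open scoped ENNReal

theorem ENNReal.tsum_inv_natCast_add_one : ∑' n : ℕ, ((n : ℝ≥0∞) + 1)⁻¹ = ∞ := by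
  have hreal : ¬ Summable (fun n : ℕ => ((n : ℝ) + 1)⁻¹) := by
    simpa using mt (summable_nat_add_iff 1).1 Real.not_summable_natCast_inv
  have hnnreal : ¬ Summable (fun n : ℕ => ((n : NNReal) + 1)⁻¹) := by
    rw [← NNReal.summable_coe]
    simpa using hreal
  have := ENNReal.tsum_coe_ne_top_iff_summable.not.2 hnnreal
  rw [not_not] at this
  simpa [ENNReal.coe_inv] using this

theorem tsum_comp_length {α : Type*} [Fintype α] (F : ℕ → ℝ≥0∞) :
    ∑' x : List α, F x.length = ∑' n, (Fintype.card α : ℝ≥0∞) ^ n * F n := by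
  rw [← (Equiv.sigmaFiberEquiv List.length).tsum_eq, ENNReal.tsum_sigma']
  refine tsum_congr fun n => ?_
  rw [tsum_congr fun x => by rw [Equiv.sigmaFiberEquiv_apply, x.2]]
  change ∑' _ : List.Vector α n, F n = _
  rw [ENNReal.tsum_const, ENat.card_eq_coe_fintype_card, card_vector]
  norm_cast

theorem Nat.pow_clog_le_mul {b n : ℕ} (hb : 1 < b) (hn : n ≠ 0) : b ^ clog b n ≤ b * n := by
  rcases Nat.lt_or_ge 1 n with h | h
  · calc b ^ clog b n = b * b ^ (clog b n).pred := by
          rw [← pow_succ', Nat.succ_pred_eq_of_pos (Nat.clog_pos hb h)]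
      _ ≤ b * n := by gcongr; exact (Nat.pow_pred_clog_lt_self hb h).le
  · obtain rfl : n = 1 := by omega
    simpa using hb.le

theorem two_pow_two_mul_clog_succ_le (n : ℕ) :
    (2 : ℝ≥0∞) ^ (2 * Nat.clog 2 (n + 1)) ≤ 4 * ((n : ℝ≥0∞) + 1) ^ 2 := by
  have h := Nat.pow_clog_le_mul one_lt_two n.succ_ne_zero
  have : 2 ^ (2 * Nat.clog 2 (n + 1)) ≤ 4 * (n + 1) ^ 2 := by
    rw [pow_mul', show 4 * (n + 1) ^ 2 = (2 * (n + 1)) ^ 2 by ring]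
    gcongr
  exact_mod_cast this

theorem inv_mul_inv_le_two_pow_mul_inv_two_pow_clog (c n : ℕ) :
    (2 ^ (c + 3))⁻¹ * ((n : ℝ≥0∞) + 1)⁻¹ ≤
      2 ^ n * (2⁻¹ ^ (n + 1 + 2 * Nat.clog 2 (n + 1) + c) * ((n : ℝ≥0∞) + 1)) := by
  set m : ℝ≥0∞ := (n : ℝ≥0∞) + 1
  have hm0 : m ≠ 0 := by simp [m]
  have hmt : m ≠ ∞ := by simp [m]
  have hcancel : (2 : ℝ≥0∞) ^ n * 2⁻¹ ^ n = 1 := by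
    rw [← mul_pow, ENNReal.mul_inv_cancel two_ne_zero ENNReal.ofNat_ne_top, one_pow]
  calc (2 ^ (c + 3))⁻¹ * m⁻¹ = (2 ^ (c + 1) * (4 * m ^ 2))⁻¹ * m := by
        rw [show (2 : ℝ≥0∞) ^ (c + 1) * (4 * m ^ 2) = 2 ^ (c + 3) * m * m by ring,
          ENNReal.mul_inv (a := 2 ^ (c + 3) * m) (.inr hmt) (.inr hm0), mul_assoc _ m⁻¹,
          ENNReal.inv_mul_cancel hm0 hmt, mul_one,
          ENNReal.mul_inv (.inl (pow_ne_zero _ two_ne_zero)) (.inr hm0)]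
    _ ≤ (2 ^ (c + 1) * 2 ^ (2 * Nat.clog 2 (n + 1)))⁻¹ * m := by
        gcongr
        exact two_pow_two_mul_clog_succ_le n
    _ = 2 ^ n * (2⁻¹ ^ (n + 1 + 2 * Nat.clog 2 (n + 1) + c) * m) := by
        rw [show n + 1 + 2 * Nat.clog 2 (n + 1) + c = n + (c + 1 + 2 * Nat.clog 2 (n + 1)) by ring,
          pow_add (2⁻¹ : ℝ≥0∞) n, mul_assoc (2⁻¹ ^ n), ← mul_assoc (2 ^ n), hcancel, one_mul,
          ← ENNReal.inv_pow, ← pow_add]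

theorem tsum_two_pow_mul_inv_two_pow_clog_eq_top (c : ℕ) :
    ∑' n : ℕ, 2 ^ n * (2⁻¹ ^ (n + 1 + 2 * Nat.clog 2 (n + 1) + c) * ((n : ℝ≥0∞) + 1)) = ∞ := by
  refine top_le_iff.1 ?_
  calc ∞ = ∑' n : ℕ, (2 ^ (c + 3))⁻¹ * ((n : ℝ≥0∞) + 1)⁻¹ := by
        rw [ENNReal.tsum_mul_left, ENNReal.tsum_inv_natCast_add_one,
          ENNReal.mul_top (ENNReal.inv_ne_zero.2 (ENNReal.pow_ne_top ENNReal.ofNat_ne_top))]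
    _ ≤ _ := ENNReal.tsum_le_tsum (inv_mul_inv_le_two_pow_mul_inv_two_pow_clog c)

/-- Abstract form of Lemma 3 (infapp) of Appendix F of the paper: if there is
an injective map `ψ` from the set of binary strings of length at least `1`
into `S ⊆ {0,1}*` with `ℓ(x) < ℓ(ψ(x)) ≤ ℓ(x) + 2⌈log₂ ℓ(x)⌉ + c`, then
`∑_{s ∈ S} 2^{−ℓ(s)} ℓ(s) = ∞`. -/
theorem stmt10 (S : Set (List Bool)) (c : ℕ) (ψ : List Bool → List Bool)
    (hmem : ∀ x : List Bool, 1 ≤ x.length → ψ x ∈ S)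
    (hinj : Set.InjOn ψ {x : List Bool | 1 ≤ x.length})
    (hlb : ∀ x : List Bool, 1 ≤ x.length → x.length < (ψ x).length)
    (hub : ∀ x : List Bool, 1 ≤ x.length →
      (ψ x).length ≤ x.length + 2 * Nat.clog 2 x.length + c) :
    (∑' s, Set.indicator S
      (fun s => ((2 : ℝ≥0∞)⁻¹) ^ s.length * (s.length : ℝ≥0∞)) s) = ⊤ := by
  set f : List Bool → ℝ≥0∞ := fun s => 2⁻¹ ^ s.length * s.length
  set g : ℕ → ℝ≥0∞ := fun n => 2⁻¹ ^ (n + 1 + 2 * Nat.clog 2 (n + 1) + c) * ((n : ℝ≥0∞) + 1)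
  have hcons : ∀ x : List Bool, 1 ≤ (true :: x).length := fun x => by simp
  have hinj' : Function.Injective fun x => ψ (true :: x) :=
    fun x y h => List.cons_injective (hinj (hcons x) (hcons y) h)
  have hbound : ∀ x : List Bool, g x.length ≤ S.indicator f (ψ (true :: x)) := fun x => by
    rw [Set.indicator_of_mem (hmem _ (hcons x))]
    refine mul_le_mul' (pow_le_pow_right_of_le_one' (ENNReal.inv_le_one.2 one_le_two)
      (hub _ (hcons x))) ?_
    exact_mod_cast (hlb _ (hcons x)).le
  refine top_le_iff.1 ?_
  calc ⊤ = ∑' x : List Bool, g x.length := by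
        simpa [tsum_comp_length g] using (tsum_two_pow_mul_inv_two_pow_clog_eq_top c).symm
    _ ≤ ∑' x : List Bool, S.indicator f (ψ (true :: x)) := ENNReal.tsum_le_tsum hbound
    _ ≤ ∑' s, S.indicator f s := ENNReal.tsum_comp_le_tsum_of_injective hinj' _
end

section
/- Let f : {0,1}* ⇀ {0,1}* be a partial function whose domain of definition dom f is prefix-free and nonempty, let Ω := ∑_{x ∈ dom f} 2^{−ℓ(x)} ∈ (0,1], and let p_coin(x) := 2^{−ℓ(x)}/Ω be the coin-flipping distribution on dom f. Suppose that for every y ∈ img f, ∑_{x : f(x)=y} 2^{−ℓ(x)} ℓ(x) = ∞. Then for every function G : dom f → ℝ satisfying ∑_{x : f(x)=y} e^{−G(x)} ≤ 1 for all y ∈ img f, the expectation ∑_{x ∈ dom f} p_coin(x) G(x) = ∞. In words: any heat function consistent with realizing f must generate infinite expected heat on the coin-flipping input distribution. -/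
/-!
Pick any output `y = f x₀` and let `S` be its fiber. Gibbs' inequality in the form
`-a log a ≤ a g + e^{-g}`, applied with `a = 2^{-ℓ(x)}` and `g = G x`, gives
`log 2 · 2^{-ℓ(x)} ℓ(x) ≤ 2^{-ℓ(x)} G(x) + e^{-G(x)}` on `S`. Summing over `S`, the left side
diverges by hypothesis while the `e^{-G}` terms sum to at most `1`, so `∑_{x ∈ S} 2^{-ℓ(x)} G(x)`
diverges, and so does the expected heat `Ω⁻¹ ∑_{x ∈ D} 2^{-ℓ(x)} G(x)`. Kraft's inequality makes
the series defining `Ω` converge, so that `Ω > 0`.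
-/

open scoped ENNReal

/-- A set of finite binary strings is prefix-free if no element is a proper
prefix of another element. -/
def PrefixFree (S : Set (List Bool)) : Prop :=
  ∀ x ∈ S, ∀ y ∈ S, x <+: y → x = y

/-- The weight `2^{−ℓ(x)}` of a binary string `x`. -/
noncomputable def wt (x : List Bool) : ℝ := (2 : ℝ) ^ (-(x.length : ℤ))

/-- The halting probability `Ω = ∑_{x ∈ D} 2^{−ℓ(x)}`. -/
noncomputable def Omega (D : Set (List Bool)) : ℝ :=
  ∑' x, Set.indicator D wt x

/-- The coin-flipping input distribution `p_coin(x) = 2^{−ℓ(x)}/Ω` on `D`. -/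
noncomputable def pcoin (D : Set (List Bool)) (x : List Bool) : ℝ :=
  Set.indicator D wt x / Omega D

open InformationTheory

lemma wt_pos (x : List Bool) : 0 < wt x := by
  unfold wt; positivity

lemma wt_eq_inv_two_pow (x : List Bool) : wt x = (2⁻¹ : ℝ) ^ x.length := by
  rw [wt, zpow_neg, zpow_natCast, inv_pow]

lemma Real.negMulLog_le_mul_add_exp_neg {a : ℝ} (ha : 0 ≤ a) (g : ℝ) :
    Real.negMulLog a ≤ a * g + Real.exp (-g) := by
  rcases ha.eq_or_lt with rfl | ha
  · simp [Real.exp_nonneg]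
  · have hexp : Real.exp (-g) = a * Real.exp (-g - Real.log a) := by
      rw [Real.exp_sub, Real.exp_log ha]; field_simp
    have htangent := Real.add_one_le_exp (-g - Real.log a)
    rw [Real.negMulLog, hexp]
    nlinarith

lemma ENNReal.tsum_eq_top_of_le_add {α : Type*} {f g h : α → ℝ≥0∞} (hfgh : ∀ x, f x ≤ g x + h x)
    (hf : ∑' x, f x = ⊤) (hh : ∑' x, h x ≠ ⊤) : ∑' x, g x = ⊤ := by
  have hle : ∑' x, f x ≤ ∑' x, g x + ∑' x, h x :=
    (ENNReal.tsum_le_tsum hfgh).trans_eq ENNReal.tsum_add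
  rw [hf, top_le_iff, ENNReal.add_eq_top] at hle
  exact hle.resolve_right hh

lemma PrefixFree.mono {S T : Set (List Bool)} (hT : PrefixFree T) (hST : S ⊆ T) :
    PrefixFree S :=
  fun x hx y hy => hT x (hST hx) y (hST hy)

lemma PrefixFree.uniquelyDecodable {S : Set (List Bool)} (hS : PrefixFree S) (hnil : [] ∉ S) :
    UniquelyDecodable S := by
  intro L₁
  induction L₁ with
  | nil =>
    rintro (_ | ⟨b, L₂⟩) - h₂ hflat
    · rfl
    · have hb : b = [] := List.append_eq_nil_iff.mp hflat.symm |>.1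
      exact absurd (hb ▸ h₂ b List.mem_cons_self) hnil
  | cons a L₁ ih =>
    rintro (_ | ⟨b, L₂⟩) h₁ h₂ hflat
    · have ha : a = [] := List.append_eq_nil_iff.mp hflat |>.1
      exact absurd (ha ▸ h₁ a List.mem_cons_self) hnil
    · simp only [List.flatten_cons] at hflat
      have ha := h₁ a List.mem_cons_self
      have hb := h₂ b List.mem_cons_self
      have hab : a = b := by
        rcases List.prefix_or_prefix_of_prefix (List.prefix_append a _)
          (hflat ▸ List.prefix_append b _) with h | h
        · exact hS a ha b hb h
        · exact (hS b hb a ha h).symm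
      subst hab
      rw [ih L₂ (fun w hw => h₁ w (List.mem_cons_of_mem _ hw))
        (fun w hw => h₂ w (List.mem_cons_of_mem _ hw)) (List.append_cancel_left hflat)]

/-- Kraft's inequality. The prefix-free set `{[]}` is not uniquely decodable, so it is treated
apart. -/
lemma PrefixFree.sum_wt_le_one {F : Finset (List Bool)} (hF : PrefixFree F) :
    ∑ x ∈ F, wt x ≤ 1 := by
  by_cases hnil : [] ∈ F
  · have : F = {[]} := Finset.eq_singleton_iff_unique_mem.mpr
      ⟨hnil, fun x hx => (hF [] hnil x hx List.nil_prefix).symm⟩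
    simp [this, wt]
  · simpa [wt_eq_inv_two_pow] using kraft_mcmillan_inequality (hF.uniquelyDecodable hnil)

lemma PrefixFree.summable_indicator_wt {D : Set (List Bool)} (hD : PrefixFree D) :
    Summable (D.indicator wt) := by
  classical
  refine summable_of_sum_le (c := 1) (Set.indicator_nonneg fun x _ => (wt_pos x).le) fun F => ?_
  rw [Finset.sum_indicator_eq_sum_filter]
  exact (hD.mono fun x hx => (Finset.mem_filter.mp hx).2).sum_wt_le_one

lemma Omega_pos {D : Set (List Bool)} (hD : PrefixFree D) (hne : D.Nonempty) : 0 < Omega D := by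
  obtain ⟨x, hx⟩ := hne
  exact hD.summable_indicator_wt.tsum_pos (Set.indicator_nonneg fun y _ => (wt_pos y).le) x
    (by simpa [Set.indicator_of_mem hx] using wt_pos x)

lemma ofReal_negMulLog_wt (x : List Bool) :
    ENNReal.ofReal (Real.negMulLog (wt x))
      = ENNReal.ofReal (Real.log 2) * ((2⁻¹ : ℝ≥0∞) ^ x.length * x.length) := by
  have hlog : Real.negMulLog (wt x) = Real.log 2 * (wt x * x.length) := by
    rw [Real.negMulLog, wt, Real.log_zpow]; push_cast; ring
  rw [hlog, ENNReal.ofReal_mul (Real.log_nonneg one_le_two), ENNReal.ofReal_mul (wt_pos x).le,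
    wt_eq_inv_two_pow, ENNReal.ofReal_pow (by norm_num), ENNReal.ofReal_inv_of_pos two_pos,
    ENNReal.ofReal_ofNat, ENNReal.ofReal_natCast]

lemma tsum_indicator_ofReal_wt_mul_eq_top {S : Set (List Bool)} {G : List Bool → ℝ}
    (hS : ∑' x, S.indicator (fun x => (2⁻¹ : ℝ≥0∞) ^ x.length * x.length) x = ⊤)
    (hG : ∑' x, S.indicator (fun x => ENNReal.ofReal (Real.exp (-G x))) x ≤ 1) :
    ∑' x, S.indicator (fun x => ENNReal.ofReal (wt x * G x)) x = ⊤ := by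
  refine ENNReal.tsum_eq_top_of_le_add (fun x => ?_) (f := S.indicator fun x =>
      ENNReal.ofReal (Real.log 2) * ((2⁻¹ : ℝ≥0∞) ^ x.length * x.length)) ?_
    (ne_top_of_le_ne_top ENNReal.one_ne_top hG)
  · refine (Set.indicator_le_indicator ?_).trans_eq (congrFun (Set.indicator_add S _ _) x)
    rw [← ofReal_negMulLog_wt]
    exact (ENNReal.ofReal_le_ofReal (Real.negMulLog_le_mul_add_exp_neg (wt_pos x).le _)).trans
      ENNReal.ofReal_add_le
  · simp_rw [Set.indicator_mul_right (f := fun _ => ENNReal.ofReal (Real.log 2))]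
    rw [ENNReal.tsum_mul_left, hS, ENNReal.mul_top (by simp [Real.log_pos one_lt_two])]

lemma tsum_indicator_ofReal_pcoin_mul {D : Set (List Bool)} (hΩ : 0 < Omega D)
    (g : List Bool → ℝ) :
    ∑' x, D.indicator (fun x => ENNReal.ofReal (pcoin D x * g x)) x
      = (∑' x, D.indicator (fun x => ENNReal.ofReal (wt x * g x)) x) / ENNReal.ofReal (Omega D) := by
  simp_rw [div_eq_mul_inv, ← ENNReal.tsum_mul_right, ← Set.indicator_mul_const]
  refine tsum_congr fun x => congrFun (Set.indicator_congr fun x hx => ?_) x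
  rw [pcoin, Set.indicator_of_mem hx, div_mul_eq_mul_div, ENNReal.ofReal_div_of_pos hΩ,
    div_eq_mul_inv]

/-- Section IV and Appendix F of the paper: for a partial function `f` with
nonempty prefix-free domain `D` such that every fiber satisfies
`∑_{x : f(x)=y} 2^{−ℓ(x)} ℓ(x) = ∞`, any heat function `G` consistent with
realizing `f` (i.e. with `∑_{x : f(x)=y} e^{−G(x)} ≤ 1` for all `y ∈ img f`)
generates infinite expected heat on the coin-flipping input distribution:
`∑_{x ∈ D} p_coin(x) G(x) = ∞`. -/
theorem stmt12 (D : Set (List Bool)) (hD : PrefixFree D) (hne : D.Nonempty)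
    (f : List Bool → List Bool)
    (hfib : ∀ y ∈ f '' D,
      (∑' x, Set.indicator {x | x ∈ D ∧ f x = y}
        (fun x => ((2 : ℝ≥0∞)⁻¹) ^ x.length * (x.length : ℝ≥0∞)) x) = ⊤)
    (G : List Bool → ℝ)
    (hG : ∀ y ∈ f '' D,
      (∑' x, Set.indicator {x | x ∈ D ∧ f x = y}
        (fun x => ENNReal.ofReal (Real.exp (-G x))) x) ≤ 1) :
    (∑' x, Set.indicator D (fun x => ENNReal.ofReal (pcoin D x * G x)) x) = ⊤ := by
  obtain ⟨x₀, hx₀⟩ := hne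
  have hy : f x₀ ∈ f '' D := Set.mem_image_of_mem f hx₀
  have hfiber := tsum_indicator_ofReal_wt_mul_eq_top (hfib _ hy) (hG _ hy)
  rw [tsum_indicator_ofReal_pcoin_mul (Omega_pos hD ⟨x₀, hx₀⟩), ENNReal.div_eq_top]
  refine Or.inr ⟨top_unique (hfiber ▸ ENNReal.tsum_le_tsum fun x => ?_), ENNReal.ofReal_ne_top⟩
  exact Set.indicator_le_indicator_of_subset (fun x hx => hx.1) (fun _ => zero_le) x
end
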